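/- arXiv:1811.02028 — 9 statements merged into one kernel-verified Lean document; each statement's English description precedes it below -/
import Mathlib

section
/- Subsequential limits of the splitting algorithm are stationary points (Proposition 4.1): Let A and B be nonempty subsets of topological spaces W and Z, and let ℱ : A × B → ℝ be sequentially continuous with respect to the product topology. Suppose sequences (wⁿ)ₙ in A and (zⁿ)ₙ in B satisfy, for every n ≥ 1, zⁿ ∈ argmin{ℱ(wⁿ⁻¹, z) : z ∈ B} and wⁿ ∈ argmin{ℱ(w, zⁿ) : w ∈ A}. If a subsequence (w^{n_k}, z^{n_k}) converges in the product topology to a point (w̄, z̄) ∈ A × B, then (w̄, z̄) is a stationary point of ℱ, i.e. ℱ(w̄, z̄) ≤ ℱ(w, z̄) for every w ∈ A and ℱ(w̄, z̄) ≤ ℱ(w̄, z) for every z ∈ B. -/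
open Filter Topology

/-- Subsequential limits of the splitting (alternating minimization) algorithm are
stationary points: if `F` is sequentially continuous for the product topology, the
iterates satisfy the alternating minimization conditions, and a subsequence of the
iterates converges to `(wbar, zbar) ∈ A × B`, then `(wbar, zbar)` is a stationary point,
i.e. `wbar` minimizes `w ↦ F w zbar` over `A` and `zbar` minimizes `z ↦ F wbar z` over `B`. -/
theorem splitting_subsequential_limits_stationary
    {W Z : Type*} [TopologicalSpace W] [TopologicalSpace Z]
    {A : Set W} {B : Set Z} (hA : A.Nonempty) (hB : B.Nonempty)
    (F : W → Z → ℝ)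
    (hFcont : ∀ (x : ℕ → W × Z) (q : W × Z),
      Tendsto x atTop (𝓝 q) →
        Tendsto (fun n => F (x n).1 (x n).2) atTop (𝓝 (F q.1 q.2)))
    (w : ℕ → W) (z : ℕ → Z)
    (hwA : ∀ n, w n ∈ A) (hzB : ∀ n, z n ∈ B)
    (hz : ∀ n, 1 ≤ n → ∀ z' ∈ B, F (w (n - 1)) (z n) ≤ F (w (n - 1)) z')
    (hw : ∀ n, 1 ≤ n → ∀ w' ∈ A, F (w n) (z n) ≤ F w' (z n))
    (φ : ℕ → ℕ) (hφ : StrictMono φ)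
    (wbar : W) (zbar : Z) (hwbar : wbar ∈ A) (hzbar : zbar ∈ B)
    (hconv : Tendsto (fun k => (w (φ k), z (φ k))) atTop (𝓝 (wbar, zbar))) :
    (∀ w' ∈ A, F wbar zbar ≤ F w' zbar) ∧ ∀ z' ∈ B, F wbar zbar ≤ F wbar z' := by
  -- component convergences
  have hwconv : Tendsto (fun k => w (φ k)) atTop (𝓝 wbar) :=
    (continuous_fst.tendsto _).comp hconv
  have hzconv : Tendsto (fun k => z (φ k)) atTop (𝓝 zbar) :=
    (continuous_snd.tendsto _).comp hconv
  -- values along the subsequence converge to F wbar zbar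
  have hval : Tendsto (fun k => F (w (φ k)) (z (φ k))) atTop (𝓝 (F wbar zbar)) :=
    hFcont (fun k => (w (φ k), z (φ k))) (wbar, zbar) hconv
  -- the value sequence is antitone
  have hstep : ∀ n, F (w (n + 1)) (z (n + 1)) ≤ F (w n) (z n) := by
    intro n
    have h1 : F (w (n + 1)) (z (n + 1)) ≤ F (w n) (z (n + 1)) :=
      hw (n + 1) (Nat.le_add_left 1 n) (w n) (hwA n)
    have h2 : F (w n) (z (n + 1)) ≤ F (w n) (z n) := by
      have := hz (n + 1) (Nat.le_add_left 1 n) (z n) (hzB n)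
      simpa using this
    exact h1.trans h2
  have hanti : Antitone fun n => F (w n) (z n) := antitone_nat_of_succ_le hstep
  constructor
  · intro w' hw'
    -- pass to the limit in hw along the subsequence
    have hrhs : Tendsto (fun k => F w' (z (φ k))) atTop (𝓝 (F w' zbar)) :=
      hFcont (fun k => (w', z (φ k))) (w', zbar)
        (by rw [nhds_prod_eq]; exact Tendsto.prodMk tendsto_const_nhds hzconv)
    refine le_of_tendsto_of_tendsto hval hrhs ?_
    filter_upwards [eventually_ge_atTop 1] with k hk
    exact hw (φ k) (le_trans hk (hφ.le_apply)) w' hw'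
  · intro z' hz'
    -- F (w (φ (k+1))) (z (φ (k+1))) ≤ F (w (φ k)) z'
    have key : ∀ k, F (w (φ (k + 1))) (z (φ (k + 1))) ≤ F (w (φ k)) z' := by
      intro k
      have hle : φ k + 1 ≤ φ (k + 1) := hφ (Nat.lt_succ_self k)
      have h1 : F (w (φ (k + 1))) (z (φ (k + 1))) ≤ F (w (φ k + 1)) (z (φ k + 1)) :=
        hanti hle
      have h2 : F (w (φ k + 1)) (z (φ k + 1)) ≤ F (w (φ k)) (z (φ k + 1)) :=
        hw (φ k + 1) (Nat.le_add_left 1 _) (w (φ k)) (hwA _)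
      have h3 : F (w (φ k)) (z (φ k + 1)) ≤ F (w (φ k)) z' := by
        have := hz (φ k + 1) (Nat.le_add_left 1 _) z' hz'
        simpa using this
      exact h1.trans (h2.trans h3)
    have hlhs : Tendsto (fun k => F (w (φ (k + 1))) (z (φ (k + 1)))) atTop
        (𝓝 (F wbar zbar)) := hval.comp (tendsto_add_atTop_nat 1)
    have hrhs : Tendsto (fun k => F (w (φ k)) z') atTop (𝓝 (F wbar z')) :=
      hFcont (fun k => (w (φ k), z')) (wbar, z')
        (by rw [nhds_prod_eq]; exact Tendsto.prodMk hwconv tendsto_const_nhds)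
    exact le_of_tendsto_of_tendsto' hlhs hrhs key
end

section
/- Stationary points of a convex Tikhonov functional with separable penalty are global minimizers: Let W and Z be real normed vector spaces, C ⊆ W and D ⊆ Z be convex sets, φ : W × Z → ℝ be convex on C × D and Gateaux differentiable at a point (w̄, z̄) ∈ C × D, and g : W → ℝ, h : Z → ℝ be convex on C and D respectively. Define ℱ(w, z) = φ(w, z) + g(w) + h(z). If ℱ(w̄, z̄) ≤ ℱ(w, z̄) for all w ∈ C and ℱ(w̄, z̄) ≤ ℱ(w̄, z) for all z ∈ D, then ℱ(w̄, z̄) ≤ ℱ(w, z) for all (w, z) ∈ C × D, i.e. (w̄, z̄) is a global minimizer of ℱ on C × D. -/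
open Filter Topology

private lemma lim_ge_aux {f : ℝ → ℝ} {a c : ℝ}
    (hf : Tendsto f (𝓝[≠] (0:ℝ)) (𝓝 a))
    (hb : ∀ t ∈ Set.Ioo (0:ℝ) 1, c ≤ f t) : c ≤ a := by
  have h1 : Tendsto f (𝓝[>] (0:ℝ)) (𝓝 a) :=
    hf.mono_left (nhdsWithin_mono _ (fun x hx => ne_of_gt hx))
  refine ge_of_tendsto h1 ?_
  filter_upwards [Ioo_mem_nhdsGT_of_mem (Set.mem_Ico.2 ⟨le_refl (0:ℝ), one_pos⟩)] with t ht
  exact hb t ht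

private lemma lim_le_aux {f : ℝ → ℝ} {a c : ℝ}
    (hf : Tendsto f (𝓝[≠] (0:ℝ)) (𝓝 a))
    (hb : ∀ t ∈ Set.Ioo (0:ℝ) 1, f t ≤ c) : a ≤ c := by
  have h1 : Tendsto f (𝓝[>] (0:ℝ)) (𝓝 a) :=
    hf.mono_left (nhdsWithin_mono _ (fun x hx => ne_of_gt hx))
  refine le_of_tendsto h1 ?_
  filter_upwards [Ioo_mem_nhdsGT_of_mem (Set.mem_Ico.2 ⟨le_refl (0:ℝ), one_pos⟩)] with t ht
  exact hb t ht

/-- Stationary points of a convex Tikhonov functional with separable penalty are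
global minimizers: if `φ` is convex on `C ×ˢ D` and Gateaux differentiable at
`(wbar, zbar) ∈ C × D` (with Gateaux derivative `L`), `g`, `h` are convex on `C`, `D`,
and `ℱ(w, z) = φ(w, z) + g w + h z` is minimized at `(wbar, zbar)` separately in each
variable, then `(wbar, zbar)` is a global minimizer of `ℱ` on `C × D`. -/
theorem stationary_point_of_convex_tikhonov_is_global_min
    {W Z : Type*} [NormedAddCommGroup W] [NormedSpace ℝ W]
    [NormedAddCommGroup Z] [NormedSpace ℝ Z]
    {C : Set W} {D : Set Z} (hC : Convex ℝ C) (hD : Convex ℝ D)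
    (φ : W × Z → ℝ) (g : W → ℝ) (h : Z → ℝ)
    (hφ : ConvexOn ℝ (C ×ˢ D) φ) (hg : ConvexOn ℝ C g) (hh : ConvexOn ℝ D h)
    (wbar : W) (zbar : Z) (hwbar : wbar ∈ C) (hzbar : zbar ∈ D)
    (L : W × Z →L[ℝ] ℝ)
    (hGateaux : ∀ v : W × Z,
      Tendsto (fun t : ℝ => (φ ((wbar, zbar) + t • v) - φ (wbar, zbar)) / t) (𝓝[≠] 0) (𝓝 (L v)))
    (hstatw : ∀ w ∈ C, φ (wbar, zbar) + g wbar + h zbar ≤ φ (w, zbar) + g w + h zbar)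
    (hstatz : ∀ z ∈ D, φ (wbar, zbar) + g wbar + h zbar ≤ φ (wbar, z) + g wbar + h z) :
    ∀ w ∈ C, ∀ z ∈ D, φ (wbar, zbar) + g wbar + h zbar ≤ φ (w, z) + g w + h z := by
  intro w hw z hz
  -- Directional derivative in the w-direction dominates g wbar - g w
  have key1 : g wbar - g w ≤ L (w - wbar, 0) := by
    refine lim_ge_aux (hGateaux (w - wbar, 0)) ?_
    intro t ht
    obtain ⟨ht0, ht1⟩ := ht
    have hwt : wbar + t • (w - wbar) ∈ C := by
      have h2 := hC hwbar hw (by linarith : (0:ℝ) ≤ 1 - t) ht0.le (by ring)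
      have heq : (1 - t) • wbar + t • w = wbar + t • (w - wbar) := by module
      rwa [heq] at h2
    have hgle : g (wbar + t • (w - wbar)) ≤ (1 - t) * g wbar + t * g w := by
      have h2 := hg.2 hwbar hw (by linarith : (0:ℝ) ≤ 1 - t) ht0.le (by ring)
      have heq : (1 - t) • wbar + t • w = wbar + t • (w - wbar) := by module
      rw [heq] at h2
      simpa [smul_eq_mul] using h2
    have hst := hstatw _ hwt
    have hpt : (wbar, zbar) + t • ((w - wbar, (0:Z)) : W × Z)
        = (wbar + t • (w - wbar), zbar) := by
      simp [Prod.ext_iff]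
    rw [hpt]
    rw [le_div_iff₀ ht0]
    nlinarith [hst, hgle]
  have key2 : h zbar - h z ≤ L (0, z - zbar) := by
    refine lim_ge_aux (hGateaux (0, z - zbar)) ?_
    intro t ht
    obtain ⟨ht0, ht1⟩ := ht
    have hzt : zbar + t • (z - zbar) ∈ D := by
      have h2 := hD hzbar hz (by linarith : (0:ℝ) ≤ 1 - t) ht0.le (by ring)
      have heq : (1 - t) • zbar + t • z = zbar + t • (z - zbar) := by module
      rwa [heq] at h2
    have hhle : h (zbar + t • (z - zbar)) ≤ (1 - t) * h zbar + t * h z := by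
      have h2 := hh.2 hzbar hz (by linarith : (0:ℝ) ≤ 1 - t) ht0.le (by ring)
      have heq : (1 - t) • zbar + t • z = zbar + t • (z - zbar) := by module
      rw [heq] at h2
      simpa [smul_eq_mul] using h2
    have hst := hstatz _ hzt
    have hpt : (wbar, zbar) + t • (((0:W), z - zbar) : W × Z)
        = (wbar, zbar + t • (z - zbar)) := by
      simp [Prod.ext_iff]
    rw [hpt]
    rw [le_div_iff₀ ht0]
    nlinarith [hst, hhle]
  -- Convexity of φ: L (w - wbar, z - zbar) ≤ φ (w, z) - φ (wbar, zbar)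
  have key3 : L (w - wbar, z - zbar) ≤ φ (w, z) - φ (wbar, zbar) := by
    refine lim_le_aux (hGateaux (w - wbar, z - zbar)) ?_
    intro t ht
    obtain ⟨ht0, ht1⟩ := ht
    have hmem1 : ((wbar, zbar) : W × Z) ∈ C ×ˢ D := ⟨hwbar, hzbar⟩
    have hmem2 : ((w, z) : W × Z) ∈ C ×ˢ D := ⟨hw, hz⟩
    have hconv := hφ.2 hmem1 hmem2 (by linarith : (0:ℝ) ≤ 1 - t) ht0.le (by ring)
    have hpt : (wbar, zbar) + t • ((w - wbar, z - zbar) : W × Z)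
        = (1 - t) • ((wbar, zbar) : W × Z) + t • ((w, z) : W × Z) := by
      simp [Prod.ext_iff, smul_sub, sub_smul, one_smul]
      constructor <;> abel
    rw [hpt, div_le_iff₀ ht0]
    have := hconv
    simp only [smul_eq_mul] at this
    nlinarith [this]
  have hsplit : L (w - wbar, z - zbar) = L (w - wbar, 0) + L (0, z - zbar) := by
    rw [← map_add]
    congr 1
    simp
  linarith [key1, key2, key3, hsplit.ge, hsplit.le]
end

section
/- Stability of stationary points under data perturbation (Proposition 4.2): Let A and B be nonempty subsets of topological spaces W and Z, Y a real normed space, F : A × B → Y sequentially continuous from the product topology to the norm topology, g : A → [0, ∞) and h : B → [0, ∞) sequentially continuous, p ≥ 1, and α₁, α₂ > 0. For y ∈ Y define ℱ(w, z; y) = ‖F(w, z) − y‖ᵖ + α₁ g(w) + α₂ h(z). Assume that for every M > 0 the level set {(w, z) ∈ A × B : ℱ(w, z; y^δ) ≤ M} is sequentially precompact in A × B. Let (y_k)ₖ be a sequence in Y with ‖y_k − y^δ‖ → 0, let (w⁰, z⁰) ∈ A × B be fixed, and for each k let (w̄ᵏ, z̄ᵏ) ∈ A × B be a stationary point of ℱ(·,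 ·; y_k) (i.e. w̄ᵏ minimizes w ↦ ℱ(w, z̄ᵏ; y_k) over A and z̄ᵏ minimizes z ↦ ℱ(w̄ᵏ, z; y_k) over B) that additionally satisfies ℱ(w̄ᵏ, z̄ᵏ; y_k) ≤ ℱ(w⁰, z⁰; y_k). Then the sequence (w̄ᵏ, z̄ᵏ)ₖ has a subsequence converging in the product topology, and the limit of every convergent subsequence is a stationary point of ℱ(·, ·; y^δ). -/
open Filter Topology

/-- The Tikhonov-type functional `ℱ(w, z; y) = ‖F w z − y‖ᵖ + α₁ g w + α₂ h z`. -/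
noncomputable def tikFun {W Z Y : Type*} [NormedAddCommGroup Y]
    (F : W → Z → Y) (g : W → ℝ) (h : Z → ℝ) (p α₁ α₂ : ℝ) (y : Y)
    (w : W) (z : Z) : ℝ :=
  ‖F w z - y‖ ^ p + α₁ * g w + α₂ * h z

/-- Auxiliary: convergence of the Tikhonov functional values along convergent sequences. -/
private lemma tik_tendsto {W Z Y : Type*} [TopologicalSpace W] [TopologicalSpace Z]
    [NormedAddCommGroup Y] {A : Set W} {B : Set Z}
    {F : W → Z → Y} {g : W → ℝ} {h : Z → ℝ} {p α₁ α₂ : ℝ} (hp : 0 ≤ p)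
    (hFcont : ∀ (x : ℕ → W × Z) (q : W × Z), (∀ n, (x n).1 ∈ A ∧ (x n).2 ∈ B) →
      q.1 ∈ A → q.2 ∈ B → Tendsto x atTop (𝓝 q) →
        Tendsto (fun n => F (x n).1 (x n).2) atTop (𝓝 (F q.1 q.2)))
    (hgcont : ∀ (w : ℕ → W) (q : W), (∀ n, w n ∈ A) → q ∈ A →
      Tendsto w atTop (𝓝 q) → Tendsto (fun n => g (w n)) atTop (𝓝 (g q)))
    (hhcont : ∀ (z : ℕ → Z) (q : Z), (∀ n, z n ∈ B) → q ∈ B →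
      Tendsto z atTop (𝓝 q) → Tendsto (fun n => h (z n)) atTop (𝓝 (h q)))
    (xn : ℕ → W × Z) (q : W × Z) (hmem : ∀ n, (xn n).1 ∈ A ∧ (xn n).2 ∈ B)
    (hqA : q.1 ∈ A) (hqB : q.2 ∈ B) (hconv : Tendsto xn atTop (𝓝 q))
    (yn : ℕ → Y) (yl : Y) (hyn : Tendsto yn atTop (𝓝 yl)) :
    Tendsto (fun n => tikFun F g h p α₁ α₂ (yn n) (xn n).1 (xn n).2) atTop
      (𝓝 (tikFun F g h p α₁ α₂ yl q.1 q.2)) := by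
  unfold tikFun
  have hF : Tendsto (fun n => F (xn n).1 (xn n).2 - yn n) atTop (𝓝 (F q.1 q.2 - yl)) :=
    (hFcont xn q hmem hqA hqB hconv).sub hyn
  have hpow : Tendsto (fun n => ‖F (xn n).1 (xn n).2 - yn n‖ ^ p) atTop
      (𝓝 (‖F q.1 q.2 - yl‖ ^ p)) :=
    (Real.continuousAt_rpow_const _ p (Or.inr hp)).tendsto.comp hF.norm
  have h1 : Tendsto (fun n => (xn n).1) atTop (𝓝 q.1) :=
    (continuous_fst.tendsto q).comp hconv
  have h2 : Tendsto (fun n => (xn n).2) atTop (𝓝 q.2) :=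
    (continuous_snd.tendsto q).comp hconv
  have hg : Tendsto (fun n => α₁ * g ((xn n).1)) atTop (𝓝 (α₁ * g q.1)) :=
    (hgcont _ q.1 (fun n => (hmem n).1) hqA h1).const_mul α₁
  have hh : Tendsto (fun n => α₂ * h ((xn n).2)) atTop (𝓝 (α₂ * h q.2)) :=
    (hhcont _ q.2 (fun n => (hmem n).2) hqB h2).const_mul α₂
  exact (hpow.add hg).add hh

/-- Stability of stationary points under data perturbation (Proposition 4.2):
if `y_k → y^δ` in norm and `(w̄ᵏ, z̄ᵏ)` are stationary points of the Tikhonov-type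
functional with data `y_k` whose values do not exceed the value at a fixed point
`(w⁰, z⁰)`, then `(w̄ᵏ, z̄ᵏ)` has a convergent subsequence, and every subsequential
limit is a stationary point of the Tikhonov-type functional with data `y^δ`. -/
theorem stationary_points_stable_under_data_perturbation
    {W Z : Type*} [TopologicalSpace W] [TopologicalSpace Z]
    {Y : Type*} [NormedAddCommGroup Y]
    (A : Set W) (B : Set Z) (hA : A.Nonempty) (hB : B.Nonempty)
    (F : W → Z → Y) (g : W → ℝ) (h : Z → ℝ)
    (p : ℝ) (hp : 1 ≤ p) (α₁ α₂ : ℝ) (hα₁ : 0 < α₁) (hα₂ : 0 < α₂)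
    (hgnn : ∀ w ∈ A, 0 ≤ g w) (hhnn : ∀ z ∈ B, 0 ≤ h z)
    (hFcont : ∀ (x : ℕ → W × Z) (q : W × Z), (∀ n, (x n).1 ∈ A ∧ (x n).2 ∈ B) →
      q.1 ∈ A → q.2 ∈ B → Tendsto x atTop (𝓝 q) →
        Tendsto (fun n => F (x n).1 (x n).2) atTop (𝓝 (F q.1 q.2)))
    (hgcont : ∀ (w : ℕ → W) (q : W), (∀ n, w n ∈ A) → q ∈ A →
      Tendsto w atTop (𝓝 q) → Tendsto (fun n => g (w n)) atTop (𝓝 (g q)))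
    (hhcont : ∀ (z : ℕ → Z) (q : Z), (∀ n, z n ∈ B) → q ∈ B →
      Tendsto z atTop (𝓝 q) → Tendsto (fun n => h (z n)) atTop (𝓝 (h q)))
    (yδ : Y)
    (hlevel : ∀ M > (0 : ℝ), ∀ (x : ℕ → W × Z), (∀ n, (x n).1 ∈ A ∧ (x n).2 ∈ B) →
      (∀ n, tikFun F g h p α₁ α₂ yδ (x n).1 (x n).2 ≤ M) →
      ∃ φ : ℕ → ℕ, StrictMono φ ∧
        ∃ q : W × Z, q.1 ∈ A ∧ q.2 ∈ B ∧ Tendsto (x ∘ φ) atTop (𝓝 q))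
    (y : ℕ → Y) (hy : Tendsto (fun k => ‖y k - yδ‖) atTop (𝓝 0))
    (w0 : W) (z0 : Z) (hw0 : w0 ∈ A) (hz0 : z0 ∈ B)
    (x : ℕ → W × Z) (hxAB : ∀ k, (x k).1 ∈ A ∧ (x k).2 ∈ B)
    (hstatw : ∀ k, ∀ w ∈ A,
      tikFun F g h p α₁ α₂ (y k) (x k).1 (x k).2 ≤ tikFun F g h p α₁ α₂ (y k) w (x k).2)
    (hstatz : ∀ k, ∀ z ∈ B,
      tikFun F g h p α₁ α₂ (y k) (x k).1 (x k).2 ≤ tikFun F g h p α₁ α₂ (y k) (x k).1 z)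
    (hinit : ∀ k,
      tikFun F g h p α₁ α₂ (y k) (x k).1 (x k).2 ≤ tikFun F g h p α₁ α₂ (y k) w0 z0) :
    (∃ φ : ℕ → ℕ, StrictMono φ ∧
      ∃ q : W × Z, q.1 ∈ A ∧ q.2 ∈ B ∧ Tendsto (x ∘ φ) atTop (𝓝 q)) ∧
    ∀ (φ : ℕ → ℕ), StrictMono φ → ∀ q : W × Z, q.1 ∈ A → q.2 ∈ B →
      Tendsto (x ∘ φ) atTop (𝓝 q) →
      (∀ w ∈ A, tikFun F g h p α₁ α₂ yδ q.1 q.2 ≤ tikFun F g h p α₁ α₂ yδ w q.2) ∧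
      ∀ z ∈ B, tikFun F g h p α₁ α₂ yδ q.1 q.2 ≤ tikFun F g h p α₁ α₂ yδ q.1 z := by
  have hp0 : (0 : ℝ) < p := lt_of_lt_of_le one_pos hp
  have hyδ : Tendsto y atTop (𝓝 yδ) := tendsto_iff_norm_sub_tendsto_zero.mpr hy
  -- a uniform bound on ‖y k - yδ‖
  obtain ⟨D, hD⟩ := hy.bddAbove_range
  have hDmem : ∀ k, ‖y k - yδ‖ ≤ D := fun k => hD (Set.mem_range_self k)
  have hD0 : 0 ≤ D := le_trans (norm_nonneg _) (hDmem 0)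
  -- uniform bound M0 on tik values with data y k
  set M0 : ℝ := (‖F w0 z0 - yδ‖ + D) ^ p + α₁ * g w0 + α₂ * h z0 with hM0def
  have hM0bound : ∀ k, tikFun F g h p α₁ α₂ (y k) (x k).1 (x k).2 ≤ M0 := by
    intro k
    refine (hinit k).trans ?_
    unfold tikFun
    have hb : ‖F w0 z0 - y k‖ ≤ ‖F w0 z0 - yδ‖ + D := by
      calc ‖F w0 z0 - y k‖ = ‖(F w0 z0 - yδ) - (y k - yδ)‖ := by congr 1; abel
        _ ≤ ‖F w0 z0 - yδ‖ + ‖y k - yδ‖ := norm_sub_le _ _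
        _ ≤ ‖F w0 z0 - yδ‖ + D := by linarith [hDmem k]
    have := Real.rpow_le_rpow (norm_nonneg _) hb hp0.le
    rw [hM0def]; linarith
  have hgh : ∀ k, 0 ≤ α₁ * g ((x k).1) + α₂ * h ((x k).2) := by
    intro k
    have h1 := hgnn _ (hxAB k).1
    have h2 := hhnn _ (hxAB k).2
    nlinarith [hα₁.le, hα₂.le]
  have hM0nn : 0 ≤ M0 := by
    refine le_trans ?_ (hM0bound 0)
    unfold tikFun
    have := hgh 0
    have := Real.rpow_nonneg (norm_nonneg (F (x 0).1 (x 0).2 - y 0)) p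
    linarith
  -- bound on residual norms
  have hres : ∀ k, ‖F (x k).1 (x k).2 - y k‖ ≤ M0 ^ (1 / p) := by
    intro k
    have h1 : ‖F (x k).1 (x k).2 - y k‖ ^ p ≤ M0 := by
      have h2 := hM0bound k
      unfold tikFun at h2
      have := hgh k
      linarith
    have h2 : (‖F (x k).1 (x k).2 - y k‖ ^ p) ^ (1 / p) ≤ M0 ^ (1 / p) :=
      Real.rpow_le_rpow (Real.rpow_nonneg (norm_nonneg _) p) h1 (by positivity)
    rwa [← Real.rpow_mul (norm_nonneg _), mul_one_div_cancel hp0.ne', Real.rpow_one] at h2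
  -- uniform bound on tik values with data yδ
  set M : ℝ := (M0 ^ (1 / p) + D) ^ p + M0 + 1 with hMdef
  have hMpos : 0 < M := by
    have h1 : 0 ≤ (M0 ^ (1 / p) + D) ^ p :=
      Real.rpow_nonneg (by positivity) p
    rw [hMdef]; linarith
  have hMbound : ∀ k, tikFun F g h p α₁ α₂ yδ (x k).1 (x k).2 ≤ M := by
    intro k
    have hb : ‖F (x k).1 (x k).2 - yδ‖ ≤ M0 ^ (1 / p) + D := by
      calc ‖F (x k).1 (x k).2 - yδ‖
          = ‖(F (x k).1 (x k).2 - y k) + (y k - yδ)‖ := by congr 1; abel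
        _ ≤ ‖F (x k).1 (x k).2 - y k‖ + ‖y k - yδ‖ := norm_add_le _ _
        _ ≤ M0 ^ (1 / p) + D := add_le_add (hres k) (hDmem k)
    have h1 : ‖F (x k).1 (x k).2 - yδ‖ ^ p ≤ (M0 ^ (1 / p) + D) ^ p :=
      Real.rpow_le_rpow (norm_nonneg _) hb hp0.le
    have h2 : α₁ * g ((x k).1) + α₂ * h ((x k).2) ≤ M0 := by
      have h3 := hM0bound k
      unfold tikFun at h3
      have := Real.rpow_nonneg (norm_nonneg (F (x k).1 (x k).2 - y k)) p
      linarith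
    unfold tikFun
    rw [hMdef]; linarith
  refine ⟨hlevel M hMpos x hxAB hMbound, ?_⟩
  intro φ hφ q hqA hqB hconv
  have hyφ : Tendsto (fun n => y (φ n)) atTop (𝓝 yδ) := hyδ.comp hφ.tendsto_atTop
  -- limit of tik values along the subsequence
  have hL : Tendsto (fun n => tikFun F g h p α₁ α₂ (y (φ n)) (x (φ n)).1 (x (φ n)).2)
      atTop (𝓝 (tikFun F g h p α₁ α₂ yδ q.1 q.2)) :=
    tik_tendsto hp0.le hFcont hgcont hhcont (x ∘ φ) q (fun n => hxAB (φ n)) hqA hqB hconv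
      (fun n => y (φ n)) yδ hyφ
  have h2conv : Tendsto (fun n => (x (φ n)).2) atTop (𝓝 q.2) :=
    (continuous_snd.tendsto q).comp hconv
  have h1conv : Tendsto (fun n => (x (φ n)).1) atTop (𝓝 q.1) :=
    (continuous_fst.tendsto q).comp hconv
  constructor
  · intro w hwA
    have hR : Tendsto (fun n => tikFun F g h p α₁ α₂ (y (φ n)) w (x (φ n)).2)
        atTop (𝓝 (tikFun F g h p α₁ α₂ yδ w q.2)) := by
      have := tik_tendsto (α₁ := α₁) (α₂ := α₂) hp0.le hFcont hgcont hhcont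
        (fun n => (w, (x (φ n)).2)) (w, q.2)
        (fun n => ⟨hwA, (hxAB (φ n)).2⟩) hwA hqB
        (tendsto_const_nhds.prodMk_nhds h2conv)
        (fun n => y (φ n)) yδ hyφ
      exact this
    exact le_of_tendsto_of_tendsto' hL hR (fun n => hstatw (φ n) w hwA)
  · intro z hzB
    have hR : Tendsto (fun n => tikFun F g h p α₁ α₂ (y (φ n)) (x (φ n)).1 z)
        atTop (𝓝 (tikFun F g h p α₁ α₂ yδ q.1 z)) := by
      have := tik_tendsto (α₁ := α₁) (α₂ := α₂) hp0.le hFcont hgcont hhcont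
        (fun n => ((x (φ n)).1, z)) (q.1, z)
        (fun n => ⟨(hxAB (φ n)).1, hzB⟩) hqA hzB
        (h1conv.prodMk_nhds tendsto_const_nhds)
        (fun n => y (φ n)) yδ hyφ
      exact this
    exact le_of_tendsto_of_tendsto' hL hR (fun n => hstatz (φ n) z hzB)
end

section
/- Lower bound for the duality pairing under the tangential cone condition (key estimate in the proof of Proposition 4.3, Hilbert case p = 2): Let X be a real normed space and Y a real Hilbert space. Let F be a map from a subset of X into Y that is Fréchet differentiable at x̄ with derivative F′(x̄) : X → Y, and let x†, x̄ lie in its domain. Assume the tangential cone condition ‖F(x†) − F(x̄) − F′(x̄)(x† − x̄)‖ ≤ η ‖F(x†) − F(x̄)‖ with 0 ≤ η, and let y^δ ∈ Y and δ ≥ 0 satisfy ‖F(x†) − y^δ‖ ≤ δ. Then ⟨F(x̄) − y^δ, F′(x̄)(x̄ − x†)⟩ ≥ ‖F(x̄) − y^δ‖² − ‖F(x̄) − y^δ‖ · ((1 + η)δ + η‖F(x̄) − y^δ‖). -/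
open scoped RealInnerProductSpace

/-- Lower bound for the duality pairing under the tangential cone condition
(key estimate in the proof of Proposition 4.3, Hilbert case `p = 2`). -/
theorem duality_pairing_lower_bound_tangential_cone
    {X Y : Type*} [NormedAddCommGroup X] [NormedSpace ℝ X]
    [NormedAddCommGroup Y] [InnerProductSpace ℝ Y]
    (𝒟 : Set X) (F : X → Y) (F' : X →L[ℝ] Y)
    (xbar xdag : X) (hxbar : xbar ∈ 𝒟) (hxdag : xdag ∈ 𝒟)
    (hF' : HasFDerivAt F F' xbar)
    (η : ℝ) (hη : 0 ≤ η)
    (htc : ‖F xdag - F xbar - F' (xdag - xbar)‖ ≤ η * ‖F xdag - F xbar‖)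
    (yδ : Y) (δ : ℝ) (hδ : 0 ≤ δ) (hnoise : ‖F xdag - yδ‖ ≤ δ) :
    ⟪F xbar - yδ, F' (xbar - xdag)⟫ ≥
      ‖F xbar - yδ‖ ^ 2 - ‖F xbar - yδ‖ * ((1 + η) * δ + η * ‖F xbar - yδ‖) := by
  set r : Y := F xbar - yδ with hr
  have hdecomp : F' (xbar - xdag) - r =
      (F xdag - F xbar - F' (xdag - xbar)) - (F xdag - yδ) := by
    simp only [map_sub, hr]
    abel
  have hb : ‖F' (xbar - xdag) - r‖ ≤ (1 + η) * δ + η * ‖r‖ := by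
    rw [hdecomp]
    calc ‖(F xdag - F xbar - F' (xdag - xbar)) - (F xdag - yδ)‖
        ≤ ‖F xdag - F xbar - F' (xdag - xbar)‖ + ‖F xdag - yδ‖ := norm_sub_le _ _
      _ ≤ η * ‖F xdag - F xbar‖ + δ := add_le_add htc hnoise
      _ ≤ η * (‖F xdag - yδ‖ + ‖yδ - F xbar‖) + δ := by
          gcongr
          calc ‖F xdag - F xbar‖ = ‖(F xdag - yδ) + (yδ - F xbar)‖ := by abel_nf
            _ ≤ _ := norm_add_le _ _
      _ ≤ η * (δ + ‖r‖) + δ := by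
          gcongr
          rw [hr, ← norm_neg]; simp
      _ = (1 + η) * δ + η * ‖r‖ := by ring
  have key : ⟪r, F' (xbar - xdag)⟫ = ‖r‖ ^ 2 + ⟪r, F' (xbar - xdag) - r⟫ := by
    rw [inner_sub_right, real_inner_self_eq_norm_sq]; ring
  have habs : |⟪r, F' (xbar - xdag) - r⟫| ≤ ‖r‖ * ((1 + η) * δ + η * ‖r‖) := by
    calc |⟪r, F' (xbar - xdag) - r⟫| ≤ ‖r‖ * ‖F' (xbar - xdag) - r‖ :=
          abs_real_inner_le_norm _ _
      _ ≤ _ := by gcongr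
  rw [key]
  nlinarith [abs_le.mp habs]
end

section
/- Penalty estimate at stationary points (inequality (28) of the paper, Hilbert case p = 2): Let W, Z, Y be real Hilbert spaces and X = W × Z with the product inner product. Let F be a map from a subset of X into Y, Fréchet differentiable at x̄ = (w̄, z̄) with derivative F′(x̄) and Hilbert-space adjoint F′(x̄)*. Let g : W → ℝ and h : Z → ℝ be convex, let x† = (w†, z†) be in the domain of F with ‖F(x†) − y^δ‖ ≤ δ, and assume the tangential cone condition ‖F(x†) − F(x̄) − F′(x̄)(x† − x̄)‖ ≤ η ‖F(x†) − F(x̄)‖ with 0 ≤ η. Suppose there exist α₁, α₂ > 0 and subgradients γ of g at w̄ (i.e. g(w) ≥ g(w̄) + ⟨γ, w − w̄⟩ for all w) and β of h at z̄ such that F′(x̄)*(F(x̄) − y^δ) + (α₁ γ, α₂ β) = 0. Then α₁ (g(w†) − g(w̄)) + α₂ (h(z†) − h(z̄)) ≥ (1 − η)‖F(x̄) − y^δ‖² − (1 + η) δ ‖F(x̄) − y^δ‖. -/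
open scoped RealInnerProductSpace

/-- Penalty estimate at stationary points (inequality (28) of the paper, Hilbert case
`p = 2`): under the tangential cone condition and the first-order optimality condition
`F′(xbar)*(F(xbar) − y^δ) + (α₁ γ, α₂ β) = 0` (stated equivalently against all directions
`(u, v)`, the inner product on `X = W × Z` being the product inner product), one has
`α₁ (g w† − g wbar) + α₂ (h z† − h zbar) ≥ (1 − η)‖F xbar − y^δ‖² − (1 + η) δ ‖F xbar − y^δ‖`. -/
theorem penalty_estimate_at_stationary_points
    {W Z Y : Type*}
    [NormedAddCommGroup W] [InnerProductSpace ℝ W]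
    [NormedAddCommGroup Z] [InnerProductSpace ℝ Z]
    [NormedAddCommGroup Y] [InnerProductSpace ℝ Y]
    (𝒟 : Set (W × Z)) (F : W × Z → Y) (F' : W × Z →L[ℝ] Y)
    (wbar : W) (zbar : Z) (hxbar : (wbar, zbar) ∈ 𝒟) (hF' : HasFDerivAt F F' (wbar, zbar))
    (g : W → ℝ) (h : Z → ℝ)
    (hg : ConvexOn ℝ Set.univ g) (hh : ConvexOn ℝ Set.univ h)
    (wdag : W) (zdag : Z) (hxdag : (wdag, zdag) ∈ 𝒟)
    (yδ : Y) (δ : ℝ) (hnoise : ‖F (wdag, zdag) - yδ‖ ≤ δ)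
    (η : ℝ) (hη : 0 ≤ η)
    (htc : ‖F (wdag, zdag) - F (wbar, zbar) - F' ((wdag, zdag) - (wbar, zbar))‖ ≤
      η * ‖F (wdag, zdag) - F (wbar, zbar)‖)
    (α₁ α₂ : ℝ) (hα₁ : 0 < α₁) (hα₂ : 0 < α₂)
    (γ : W) (β : Z)
    (hγ : ∀ w : W, g wbar + ⟪γ, w - wbar⟫ ≤ g w)
    (hβ : ∀ z : Z, h zbar + ⟪β, z - zbar⟫ ≤ h z)
    (hopt : ∀ (u : W) (v : Z),
      ⟪F (wbar, zbar) - yδ, F' (u, v)⟫ + (α₁ * ⟪γ, u⟫ + α₂ * ⟪β, v⟫) = 0) :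
    α₁ * (g wdag - g wbar) + α₂ * (h zdag - h zbar) ≥
      (1 - η) * ‖F (wbar, zbar) - yδ‖ ^ 2 - (1 + η) * δ * ‖F (wbar, zbar) - yδ‖ := by
  set r := F (wbar, zbar) - yδ with hrdef
  set s := F (wdag, zdag) - F (wbar, zbar) with hsdef
  have hδ0 : 0 ≤ δ := le_trans (norm_nonneg _) hnoise
  have hkey := hopt (wdag - wbar) (zdag - zbar)
  have hprod : ((wdag, zdag) : W × Z) - (wbar, zbar) = (wdag - wbar, zdag - zbar) := rfl
  rw [hprod] at htc
  set T := F' (wdag - wbar, zdag - zbar) with hTdef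
  -- e = s - T
  have h2 : -(‖r‖ * (η * ‖s‖)) ≤ ⟪r, s - T⟫ := by
    have := abs_real_inner_le_norm r (s - T)
    have hb : ‖r‖ * ‖s - T‖ ≤ ‖r‖ * (η * ‖s‖) :=
      mul_le_mul_of_nonneg_left htc (norm_nonneg _)
    have := (abs_le.mp this).1
    linarith
  have h3 : ‖s‖ ≤ δ + ‖r‖ := by
    have : s = (F (wdag, zdag) - yδ) - r := by rw [hrdef, hsdef]; abel
    rw [this]
    calc ‖F (wdag, zdag) - yδ - r‖ ≤ ‖F (wdag, zdag) - yδ‖ + ‖r‖ := norm_sub_le _ _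
      _ ≤ δ + ‖r‖ := by linarith
  have hs : ⟪r, s⟫ = ⟪r, F (wdag, zdag) - yδ⟫ - ‖r‖ ^ 2 := by
    have : s = (F (wdag, zdag) - yδ) - r := by rw [hrdef, hsdef]; abel
    rw [this, inner_sub_right, real_inner_self_eq_norm_sq]
  have h1 : ⟪r, F (wdag, zdag) - yδ⟫ ≤ δ * ‖r‖ := by
    calc ⟪r, F (wdag, zdag) - yδ⟫ ≤ ‖r‖ * ‖F (wdag, zdag) - yδ‖ := real_inner_le_norm _ _
      _ ≤ δ * ‖r‖ := by nlinarith [norm_nonneg r]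
  have hA : α₁ * ⟪γ, wdag - wbar⟫ ≤ α₁ * (g wdag - g wbar) := by
    have := hγ wdag; nlinarith
  have hB : α₂ * ⟪β, zdag - zbar⟫ ≤ α₂ * (h zdag - h zbar) := by
    have := hβ zdag; nlinarith
  have hst : ⟪r, s - T⟫ = ⟪r, s⟫ - ⟪r, T⟫ := inner_sub_right _ _ _
  have hinner : ⟪r, T⟫ = ⟪r, s⟫ - ⟪r, s - T⟫ := by linarith
  have hr0 : 0 ≤ ‖r‖ := norm_nonneg r
  nlinarith [mul_nonneg hη hr0]
end

section
/- Discrepancy principle attainable for small regularization parameters (Proposition 4.3, Hilbert case p = 2): Let W, Z, Y be real Hilbert spaces and X = W × Z. Let F be a map from a subset 𝒟 of X into Y, g : W → [0, ∞) and h : Z → [0, ∞) convex, x† = (w†, z†) ∈ 𝒟 with ‖F(x†) − y^δ‖ ≤ δ for some δ > 0, and fix 0 ≤ η < 1/2 and λ > (1 + η)/(1 − η). Suppose that for every pair α₁, α₂ > 0 there is a point x̄_{α₁,α₂} = (w̄, z̄) ∈ 𝒟 at which F is Fréchet differentiable such that: (a) the tangential cone condition ‖F(x†) − F(x̄) − F′(x̄)(x†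 − x̄)‖ ≤ η ‖F(x†) − F(x̄)‖ holds between x̄ = x̄_{α₁,α₂} and x†, and (b) there exist subgradients γ of g at w̄ and β of h at z̄ with F′(x̄)*(F(x̄) − y^δ) + (α₁ γ, α₂ β) = 0. Then there exist α₁⁺, α₂⁺ > 0 such that for all α₁ ∈ (0, α₁⁺) and α₂ ∈ (0, α₂⁺) one has ‖F(x̄_{α₁,α₂}) − y^δ‖ < λδ. -/
/-!
Write `t = ‖F x̄ − y^δ‖` and `C = α₁ g(w†) + α₂ h(z†)`. Testing the optimality condition
with the direction `x† − x̄` and using the subgradient inequalities (together with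
`g, h ≥ 0`) gives `⟪F x̄ − y^δ, F′(x̄)(x† − x̄)⟫ ≥ −C`. Splitting `F x† − F x̄` into its
linearization plus a remainder controlled by the tangential cone condition turns this into
the quadratic inequality `(1 − η) t² ≤ C + (1 + η) δ t`. Since `λ (1 − η) > 1 + η`, the
quadratic `(1 − η) t² − (1 + η) δ t` exceeds a fixed `K > 0` once `t ≥ λ δ`, so `t < λ δ`
as soon as `C < K`, which holds for small `α₁, α₂`.
-/

open scoped RealInnerProductSpace

lemma inner_sub_le_of_subgradient_of_nonneg {E : Type*} [NormedAddCommGroup E]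
    [InnerProductSpace ℝ E] {g : E → ℝ} {w₀ γ : E}
    (hγ : ∀ w, g w₀ + ⟪γ, w - w₀⟫ ≤ g w) (hg₀ : 0 ≤ g w₀) (w : E) :
    ⟪γ, w - w₀⟫ ≤ g w := by
  linarith [hγ w]

lemma exists_pos_forall_mul_lt {ε a : ℝ} (hε : 0 < ε) (ha : 0 ≤ a) :
    ∃ p > (0 : ℝ), ∀ α, 0 ≤ α → α < p → α * a < ε := by
  refine ⟨ε / (a + 1), by positivity, fun α hα hαp => ?_⟩
  calc α * a ≤ α * (a + 1) := by nlinarith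
    _ < ε / (a + 1) * (a + 1) := by gcongr
    _ = ε := by field_simp

/-- `y`, `ydag` play the roles of `F x̄`, `F x†`, and `v` that of `F′(x̄)(x† − x̄)`. -/
lemma residual_quadratic_le {Y : Type*} [NormedAddCommGroup Y] [InnerProductSpace ℝ Y]
    {y ydag yδ v : Y} {C δ η : ℝ} (hη : 0 ≤ η) (hnoise : ‖ydag - yδ‖ ≤ δ)
    (hcone : ‖ydag - y - v‖ ≤ η * ‖ydag - y‖) (hlin : -C ≤ ⟪y - yδ, v⟫) :
    (1 - η) * ‖y - yδ‖ ^ 2 ≤ C + (1 + η) * δ * ‖y - yδ‖ := by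
  set t := ‖y - yδ‖
  have hdist : ‖ydag - y‖ ≤ δ + t := by
    calc ‖ydag - y‖ ≤ ‖ydag - yδ‖ + ‖yδ - y‖ := norm_sub_le_norm_sub_add_norm_sub _ _ _
      _ ≤ δ + t := by rw [norm_sub_rev yδ]; linarith
  have hremainder : -(t * (η * (δ + t))) ≤ ⟪y - yδ, ydag - y - v⟫ :=
    calc -(t * (η * (δ + t))) ≤ -(t * ‖ydag - y - v‖) := by
          gcongr; exact hcone.trans (by gcongr)
      _ ≤ ⟪y - yδ, ydag - y - v⟫ := by
          linarith [abs_real_inner_le_norm (y - yδ) (ydag - y - v),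
            neg_abs_le ⟪y - yδ, ydag - y - v⟫]
  have hsplit : ⟪y - yδ, ydag - y⟫ = ⟪y - yδ, v⟫ + ⟪y - yδ, ydag - y - v⟫ := by
    rw [← inner_add_right, add_sub_cancel]
  have hexact : ⟪y - yδ, ydag - y⟫ = ⟪y - yδ, ydag - yδ⟫ - t ^ 2 := by
    rw [← real_inner_self_eq_norm_sq, ← inner_sub_right, sub_sub_sub_cancel_right]
  have hnoise' : ⟪y - yδ, ydag - yδ⟫ ≤ t * δ :=
    (real_inner_le_norm _ _).trans (mul_le_mul_of_nonneg_left hnoise (norm_nonneg _))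
  linarith

lemma exists_pos_forall_lt_of_quadratic_le {δ η lam : ℝ} (hδ : 0 < δ) (hη0 : 0 ≤ η)
    (hη : η < 1) (hlam : (1 + η) / (1 - η) < lam) :
    ∃ K > (0 : ℝ), ∀ t C : ℝ, 0 ≤ t → C < K →
      (1 - η) * t ^ 2 ≤ C + (1 + η) * δ * t → t < lam * δ := by
  have hη1 : 0 < 1 - η := by linarith
  have hlam0 : 0 < lam := (div_nonneg (by linarith) hη1.le).trans_lt hlam
  have hgap : 1 + η < lam * (1 - η) := (div_lt_iff₀ hη1).mp hlam
  refine ⟨lam * δ ^ 2 * ((1 - η) * lam - (1 + η)), by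
    have : 0 < (1 - η) * lam - (1 + η) := by linarith
    positivity, fun t C ht hC hquad => ?_⟩
  by_contra! hge
  -- `(1 − η) t² − (1 + η) δ t − K` factors as `(t − λδ) ((1 − η)(t + λδ) − (1 + η) δ)`.
  have hfactor : 0 ≤ (1 - η) * (t + lam * δ) - (1 + η) * δ := by nlinarith
  nlinarith [mul_nonneg (sub_nonneg.mpr hge) hfactor]

theorem discrepancy_principle_attainable_general
    {W Z Y : Type*}
    [NormedAddCommGroup W] [InnerProductSpace ℝ W]
    [NormedAddCommGroup Z] [InnerProductSpace ℝ Z]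
    [NormedAddCommGroup Y] [InnerProductSpace ℝ Y]
    (𝒟 : Set (W × Z)) (F : W × Z → Y)
    (g : W → ℝ) (h : Z → ℝ)
    (hgnn : ∀ w, 0 ≤ g w) (hhnn : ∀ z, 0 ≤ h z)
    (wdag : W) (zdag : Z)
    (yδ : Y) (δ : ℝ) (hδ : 0 < δ) (hnoise : ‖F (wdag, zdag) - yδ‖ ≤ δ)
    (η : ℝ) (hη0 : 0 ≤ η) (hη : η < 1 / 2)
    (lam : ℝ) (hlam : (1 + η) / (1 - η) < lam)
    (xbar : ℝ → ℝ → W × Z)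
    (hxbar : ∀ α₁ α₂ : ℝ, 0 < α₁ → 0 < α₂ →
      xbar α₁ α₂ ∈ 𝒟 ∧
      ∃ F' : W × Z →L[ℝ] Y, HasFDerivAt F F' (xbar α₁ α₂) ∧
        ‖F (wdag, zdag) - F (xbar α₁ α₂) - F' ((wdag, zdag) - xbar α₁ α₂)‖ ≤
          η * ‖F (wdag, zdag) - F (xbar α₁ α₂)‖ ∧
        ∃ (γ : W) (β : Z),
          (∀ w : W, g (xbar α₁ α₂).1 + ⟪γ, w - (xbar α₁ α₂).1⟫ ≤ g w) ∧
          (∀ z : Z, h (xbar α₁ α₂).2 + ⟪β, z - (xbar α₁ α₂).2⟫ ≤ h z) ∧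
          ∀ (u : W) (v : Z),
            ⟪F (xbar α₁ α₂) - yδ, F' (u, v)⟫ + (α₁ * ⟪γ, u⟫ + α₂ * ⟪β, v⟫) = 0) :
    ∃ α₁p > (0 : ℝ), ∃ α₂p > (0 : ℝ), ∀ α₁ α₂ : ℝ,
      0 < α₁ → α₁ < α₁p → 0 < α₂ → α₂ < α₂p →
        ‖F (xbar α₁ α₂) - yδ‖ < lam * δ := by
  obtain ⟨K, hK, hquad⟩ :=
    exists_pos_forall_lt_of_quadratic_le hδ hη0 (by linarith) hlam
  obtain ⟨α₁p, hα₁p, hsmall₁⟩ := exists_pos_forall_mul_lt (half_pos hK) (hgnn wdag)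
  obtain ⟨α₂p, hα₂p, hsmall₂⟩ := exists_pos_forall_mul_lt (half_pos hK) (hhnn zdag)
  refine ⟨α₁p, hα₁p, α₂p, hα₂p, fun α₁ α₂ hα₁ hα₁' hα₂ hα₂' => ?_⟩
  obtain ⟨-, F', -, hcone, γ, β, hγ, hβ, hopt⟩ := hxbar α₁ α₂ hα₁ hα₂
  have hlin : -(α₁ * g wdag + α₂ * h zdag) ≤
      ⟪F (xbar α₁ α₂) - yδ, F' ((wdag, zdag) - xbar α₁ α₂)⟫ := by
    have hw := inner_sub_le_of_subgradient_of_nonneg hγ (hgnn _) wdag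
    have hz := inner_sub_le_of_subgradient_of_nonneg hβ (hhnn _) zdag
    have hsum := hopt (wdag - (xbar α₁ α₂).1) (zdag - (xbar α₁ α₂).2)
    change _ ≤ ⟪_, F' (wdag - (xbar α₁ α₂).1, zdag - (xbar α₁ α₂).2)⟫
    linarith [mul_le_mul_of_nonneg_left hw hα₁.le, mul_le_mul_of_nonneg_left hz hα₂.le]
  exact hquad _ _ (norm_nonneg _) (by linarith [hsmall₁ α₁ hα₁.le hα₁', hsmall₂ α₂ hα₂.le hα₂'])
    (residual_quadratic_le hη0 hnoise hcone hlin)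

/-- Discrepancy principle attainable for small regularization parameters
(Proposition 4.3, Hilbert case `p = 2`): if for every pair of regularization
parameters `α₁, α₂ > 0` there is a stationary point `xbar α₁ α₂ ∈ 𝒟` at which `F`
is Fréchet differentiable, satisfying the tangential cone condition with respect to
`x† = (w†, z†)` and the first-order optimality condition, then there exist
`α₁⁺, α₂⁺ > 0` such that `‖F (xbar α₁ α₂) − y^δ‖ < λ δ` whenever
`α₁ ∈ (0, α₁⁺)` and `α₂ ∈ (0, α₂⁺)`. -/
theorem discrepancy_principle_attainable
    {W Z Y : Type*}
    [NormedAddCommGroup W] [InnerProductSpace ℝ W]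
    [NormedAddCommGroup Z] [InnerProductSpace ℝ Z]
    [NormedAddCommGroup Y] [InnerProductSpace ℝ Y]
    (𝒟 : Set (W × Z)) (F : W × Z → Y)
    (g : W → ℝ) (h : Z → ℝ)
    (hg : ConvexOn ℝ Set.univ g) (hh : ConvexOn ℝ Set.univ h)
    (hgnn : ∀ w, 0 ≤ g w) (hhnn : ∀ z, 0 ≤ h z)
    (wdag : W) (zdag : Z) (hxdag : (wdag, zdag) ∈ 𝒟)
    (yδ : Y) (δ : ℝ) (hδ : 0 < δ) (hnoise : ‖F (wdag, zdag) - yδ‖ ≤ δ)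
    (η : ℝ) (hη0 : 0 ≤ η) (hη : η < 1 / 2)
    (lam : ℝ) (hlam : (1 + η) / (1 - η) < lam)
    (xbar : ℝ → ℝ → W × Z)
    (hxbar : ∀ α₁ α₂ : ℝ, 0 < α₁ → 0 < α₂ →
      xbar α₁ α₂ ∈ 𝒟 ∧
      ∃ F' : W × Z →L[ℝ] Y, HasFDerivAt F F' (xbar α₁ α₂) ∧
        ‖F (wdag, zdag) - F (xbar α₁ α₂) - F' ((wdag, zdag) - xbar α₁ α₂)‖ ≤
          η * ‖F (wdag, zdag) - F (xbar α₁ α₂)‖ ∧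
        ∃ (γ : W) (β : Z),
          (∀ w : W, g (xbar α₁ α₂).1 + ⟪γ, w - (xbar α₁ α₂).1⟫ ≤ g w) ∧
          (∀ z : Z, h (xbar α₁ α₂).2 + ⟪β, z - (xbar α₁ α₂).2⟫ ≤ h z) ∧
          ∀ (u : W) (v : Z),
            ⟪F (xbar α₁ α₂) - yδ, F' (u, v)⟫ + (α₁ * ⟪γ, u⟫ + α₂ * ⟪β, v⟫) = 0) :
    ∃ α₁p > (0 : ℝ), ∃ α₂p > (0 : ℝ), ∀ α₁ α₂ : ℝ,
      0 < α₁ → α₁ < α₁p → 0 < α₂ → α₂ < α₂p →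
        ‖F (xbar α₁ α₂) - yδ‖ < lam * δ :=
  discrepancy_principle_attainable_general 𝒟 F g h hgnn hhnn wdag zdag yδ δ hδ hnoise η hη0 hη lam
    hlam xbar hxbar
end

section
/- Convergence of inexact solutions (Proposition 4.5): Let A and B be subsets of topological spaces W and Z, Y a real normed space, F : A × B → Y, p ≥ 1, α⁺ > 0, and g : A → [0, ∞), h : B → [0, ∞) uniformly bounded on A and B respectively. Let ỹ ∈ Y be such that the map (w, z) ↦ ‖F(w, z) − ỹ‖ is sequentially lower semicontinuous on A × B, and assume that for every M > 0 the set {(w, z) ∈ A × B : ‖F(w, z) − ỹ‖ᵖ + α⁺ g(w) + α⁺ h(z) ≤ M} is sequentially precompact in A × B. Let δ_k > 0 with δ_k → 0, let y_k ∈ Y satisfy ‖ỹ − y_k‖ ≤ δ_k, let λ > 0, and let x_k ∈ A × B satisfy ‖F(x_k) − y_k‖ ≤ λ δ_k. Then (x_k)ₖ has a subsequence converging in the product topology, and every subsequential limit x̃ satisfies F(x̃) = ỹ. -/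
open Filter Topology

/-- Convergence of inexact solutions (Proposition 4.5): with `g`, `h` uniformly
bounded, the data misfit sequentially lower semicontinuous, level sets of the
Tikhonov-type functional sequentially precompact, noise levels `δ_k → 0`, data
`y_k` with `‖ỹ − y_k‖ ≤ δ_k`, and inexact solutions `x_k` satisfying the
discrepancy bound `‖F x_k − y_k‖ ≤ λ δ_k`, the sequence `x_k` has a convergent
subsequence and every subsequential limit `x̃` satisfies `F x̃ = ỹ`. -/
theorem inexact_solutions_converge
    {W Z : Type*} [TopologicalSpace W] [TopologicalSpace Z]
    {Y : Type*} [NormedAddCommGroup Y]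
    (A : Set W) (B : Set Z) (F : W → Z → Y)
    (p : ℝ) (hp : 1 ≤ p) (αp : ℝ) (hαp : 0 < αp)
    (g : W → ℝ) (h : Z → ℝ) (hgnn : ∀ w ∈ A, 0 ≤ g w) (hhnn : ∀ z ∈ B, 0 ≤ h z)
    (hgbdd : ∃ Cg, ∀ w ∈ A, g w ≤ Cg) (hhbdd : ∃ Ch, ∀ z ∈ B, h z ≤ Ch)
    (ytil : Y)
    (hF_lsc : ∀ (x : ℕ → W × Z) (q : W × Z), (∀ n, (x n).1 ∈ A ∧ (x n).2 ∈ B) →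
      q.1 ∈ A → q.2 ∈ B → Tendsto x atTop (𝓝 q) →
      ‖F q.1 q.2 - ytil‖ ≤ Filter.liminf (fun n => ‖F (x n).1 (x n).2 - ytil‖) atTop)
    (hlevel : ∀ M > (0 : ℝ), ∀ (x : ℕ → W × Z), (∀ n, (x n).1 ∈ A ∧ (x n).2 ∈ B) →
      (∀ n, ‖F (x n).1 (x n).2 - ytil‖ ^ p + αp * g (x n).1 + αp * h (x n).2 ≤ M) →
      ∃ φ : ℕ → ℕ, StrictMono φ ∧
        ∃ q : W × Z, q.1 ∈ A ∧ q.2 ∈ B ∧ Tendsto (x ∘ φ) atTop (𝓝 q))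
    (δ : ℕ → ℝ) (hδpos : ∀ k, 0 < δ k) (hδ0 : Tendsto δ atTop (𝓝 0))
    (y : ℕ → Y) (hy : ∀ k, ‖ytil - y k‖ ≤ δ k)
    (lam : ℝ) (hlam : 0 < lam)
    (x : ℕ → W × Z) (hxAB : ∀ k, (x k).1 ∈ A ∧ (x k).2 ∈ B)
    (hdisc : ∀ k, ‖F (x k).1 (x k).2 - y k‖ ≤ lam * δ k) :
    (∃ φ : ℕ → ℕ, StrictMono φ ∧
      ∃ q : W × Z, q.1 ∈ A ∧ q.2 ∈ B ∧ Tendsto (x ∘ φ) atTop (𝓝 q)) ∧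
    ∀ (φ : ℕ → ℕ), StrictMono φ → ∀ q : W × Z, q.1 ∈ A → q.2 ∈ B →
      Tendsto (x ∘ φ) atTop (𝓝 q) → F q.1 q.2 = ytil := by
  -- basic misfit bound
  have hb : ∀ k, ‖F (x k).1 (x k).2 - ytil‖ ≤ (lam + 1) * δ k := by
    intro k
    have h1 : ‖F (x k).1 (x k).2 - ytil‖ ≤ ‖F (x k).1 (x k).2 - y k‖ + ‖y k - ytil‖ := by
      have := norm_sub_le_norm_sub_add_norm_sub (F (x k).1 (x k).2) (y k) ytil
      linarith
    have h2 : ‖y k - ytil‖ ≤ δ k := by rw [norm_sub_rev]; exact hy k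
    have := hdisc k
    nlinarith
  have hδφ : ∀ (φ : ℕ → ℕ), StrictMono φ →
      Tendsto (fun n => ‖F (x (φ n)).1 (x (φ n)).2 - ytil‖) atTop (𝓝 0) := by
    intro φ hφ
    have hδ' : Tendsto (fun n => (lam + 1) * δ (φ n)) atTop (𝓝 0) := by
      have := (hδ0.comp hφ.tendsto_atTop).const_mul (lam + 1)
      simpa using this
    refine squeeze_zero (fun n => norm_nonneg _) (fun n => hb (φ n)) hδ'
  constructor
  · -- boundedness and precompactness
    obtain ⟨Cg, hCg⟩ := hgbdd
    obtain ⟨Ch, hCh⟩ := hhbdd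
    have hCg0 : 0 ≤ Cg := le_trans (hgnn _ (hxAB 0).1) (hCg _ (hxAB 0).1)
    have hCh0 : 0 ≤ Ch := le_trans (hhnn _ (hxAB 0).2) (hCh _ (hxAB 0).2)
    obtain ⟨D, hD⟩ : BddAbove (Set.range δ) := hδ0.bddAbove_range
    have hDδ : ∀ k, δ k ≤ D := fun k => hD ⟨k, rfl⟩
    have hDpos : 0 < D := lt_of_lt_of_le (hδpos 0) (hDδ 0)
    set M : ℝ := ((lam + 1) * D) ^ p + αp * Cg + αp * Ch with hM
    have hMpos : 0 < M := by
      have h1 : 0 < ((lam + 1) * D) ^ p :=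
        Real.rpow_pos_of_pos (by nlinarith) p
      have h2 : 0 ≤ αp * Cg := mul_nonneg hαp.le hCg0
      have h3 : 0 ≤ αp * Ch := mul_nonneg hαp.le hCh0
      simp only [hM]; linarith
    refine hlevel M hMpos x hxAB ?_
    intro k
    have h1 : ‖F (x k).1 (x k).2 - ytil‖ ^ p ≤ ((lam + 1) * D) ^ p := by
      apply Real.rpow_le_rpow (norm_nonneg _) _ (by linarith)
      calc ‖F (x k).1 (x k).2 - ytil‖ ≤ (lam + 1) * δ k := hb k
        _ ≤ (lam + 1) * D := by nlinarith [hDδ k]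
    have h2 : αp * g (x k).1 ≤ αp * Cg :=
      mul_le_mul_of_nonneg_left (hCg _ (hxAB k).1) hαp.le
    have h3 : αp * h (x k).2 ≤ αp * Ch :=
      mul_le_mul_of_nonneg_left (hCh _ (hxAB k).2) hαp.le
    simp only [hM]; linarith
  · intro φ hφ q hqA hqB hconv
    have hlsc := hF_lsc (x ∘ φ) q (fun n => hxAB (φ n)) hqA hqB hconv
    have h0 : Filter.liminf (fun n => ‖F ((x ∘ φ) n).1 ((x ∘ φ) n).2 - ytil‖) atTop = 0 :=
      (hδφ φ hφ).liminf_eq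
    rw [h0] at hlsc
    have : ‖F q.1 q.2 - ytil‖ = 0 := le_antisymm hlsc (norm_nonneg _)
    rwa [norm_eq_zero, sub_eq_zero] at this
end

section
/- Derivative of the negative part of the double-exponential tail: Let ν be a Borel measure on ℝ such that ν((−∞, y]) < ∞ and ∫_{(−∞, y]} e^x dν(x) < ∞ for every y < 0. Define φ(y) = ∫_{(−∞, y]} (e^y − e^x) dν(x) for y < 0. If z < 0 satisfies ν({z}) = 0, then φ is differentiable at z with φ′(z) = e^z · ν((−∞, z]). -/
open MeasureTheory Real Set Filter Topology

/-!
Near `z`, `φ(y) = ∫ (e^y - t)⁺ dρ(t)` where `ρ` is the image under `exp` of `ν` restricted to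
`(−∞, c]` for some `z < c < 0`, a finite measure. The function `s ↦ ∫ (s - t)⁺ dρ(t)` is
differentiable by dominated convergence (its integrand is `1`-Lipschitz in `s`, with derivative
`𝟙{t < s}` off the `ρ`-null set `{s}`), with derivative `ρ((−∞, s])`; the chain rule through
`exp` gives the result.
-/

lemma hasDerivAt_max_sub_const_zero {s t : ℝ} (hts : t ≠ s) :
    HasDerivAt (fun r => max (r - t) 0) ((Iic s).indicator 1 t) s := by
  rcases hts.lt_or_gt with hts | hst
  · rw [indicator_of_mem (mem_Iic.2 hts.le), Pi.one_apply]
    refine ((hasDerivAt_id s).sub_const t).congr_of_eventuallyEq ?_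
    filter_upwards [Ioi_mem_nhds hts] with r hr
    exact max_eq_left (sub_nonneg.2 hr.le)
  · rw [indicator_of_notMem (notMem_Iic.2 hst)]
    refine (hasDerivAt_const s 0).congr_of_eventuallyEq ?_
    filter_upwards [Iio_mem_nhds hst] with r hr
    exact max_eq_right (sub_nonpos.2 hr.le)

theorem hasDerivAt_integral_max_sub_zero {ρ : Measure ℝ} [IsFiniteMeasure ρ] {s : ℝ}
    (hint : Integrable (fun t => max (s - t) 0) ρ) (hs : ρ {s} = 0) :
    HasDerivAt (fun r => ∫ t, max (r - t) 0 ∂ρ) (ρ.real (Iic s)) s := by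
  have h_ne : ∀ᵐ t ∂ρ, t ≠ s := measure_eq_zero_iff_ae_notMem.1 hs
  obtain ⟨-, h⟩ := hasDerivAt_integral_of_dominated_loc_of_lip (F' := (Iic s).indicator 1)
    (bound := fun _ => 1) univ_mem
    (Eventually.of_forall fun r => (by fun_prop : Continuous _).aestronglyMeasurable) hint
    ((measurable_const.indicator measurableSet_Iic).aestronglyMeasurable)
    (Eventually.of_forall fun t => by
      simpa using (IsometryEquiv.subRight t).isometry.lipschitz.max_const 0)
    (integrable_const _) (h_ne.mono fun _ => hasDerivAt_max_sub_const_zero)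
  rwa [integral_indicator_one measurableSet_Iic] at h

lemma setIntegral_Iic_sub_eq_setIntegral_max {f : ℝ → ℝ} (hf : Monotone f) (ν : Measure ℝ)
    {y c : ℝ} (hyc : y ≤ c) :
    ∫ x in Iic y, (f y - f x) ∂ν = ∫ x in Iic c, max (f y - f x) 0 ∂ν := by
  have h_ind : (fun x => max (f y - f x) 0) = (Iic y).indicator (fun x => f y - f x) := by
    funext x
    by_cases hxy : x ≤ y
    · rw [indicator_of_mem (mem_Iic.2 hxy), max_eq_left (sub_nonneg.2 (hf hxy))]
    · have hyx := not_le.1 hxy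
      rw [indicator_of_notMem (notMem_Iic.2 hyx), max_eq_right (sub_nonpos.2 (hf hyx.le))]
  rw [h_ind, setIntegral_indicator measurableSet_Iic, Iic_inter_Iic, min_eq_right hyc]

lemma integrable_max_sub_zero_map_exp (μ : Measure ℝ) [IsFiniteMeasure μ] (a : ℝ) :
    Integrable (fun t => max (a - t) 0) (μ.map exp) := by
  rw [integrable_map_measure (by fun_prop : Continuous _).aestronglyMeasurable
    measurable_exp.aemeasurable]
  refine .of_bound (by fun_prop : Continuous _).aestronglyMeasurable |a|
    (Eventually.of_forall fun x => ?_)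
  rw [Function.comp_apply, norm_of_nonneg (le_max_right _ _)]
  exact max_le (by linarith [exp_pos x, le_abs_self a]) (abs_nonneg a)

theorem deriv_neg_double_exponential_tail_general (ν : Measure ℝ)
    (hfin : ∀ y < (0 : ℝ), ν (Iic y) < ⊤)
    (z : ℝ) (hz : z < 0) (hatom : ν {z} = 0) :
    HasDerivAt (fun y => ∫ x in Iic y, (exp y - exp x) ∂ν)
      (exp z * (ν (Iic z)).toReal) z := by
  obtain ⟨c, hzc, hc0⟩ := exists_between hz
  set μ := ν.restrict (Iic c)
  have : IsFiniteMeasure μ := isFiniteMeasure_restrict.2 (hfin c hc0).ne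
  set ρ := μ.map exp
  have hρ_Iic : ρ (Iic (exp z)) = ν (Iic z) := by
    have h_pre : exp ⁻¹' Iic (exp z) = Iic z := by ext; simp
    rw [Measure.map_apply measurable_exp measurableSet_Iic, h_pre,
      Measure.restrict_apply measurableSet_Iic, Iic_inter_Iic, min_eq_left hzc.le]
  have hρ_atom : ρ {exp z} = 0 := by
    have h_pre : exp ⁻¹' {exp z} = {z} := by ext; simp
    rw [Measure.map_apply measurable_exp (measurableSet_singleton _), h_pre,
      Measure.restrict_apply (measurableSet_singleton z)]
    exact measure_mono_null inter_subset_left hatom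
  have h := (hasDerivAt_integral_max_sub_zero (integrable_max_sub_zero_map_exp μ _)
    hρ_atom).comp z (hasDerivAt_exp z)
  rw [Measure.real, hρ_Iic, mul_comm] at h
  refine h.congr_of_eventuallyEq ?_
  filter_upwards [Iio_mem_nhds hzc] with y hy
  simp only [Function.comp_apply]
  rw [integral_map measurable_exp.aemeasurable (by fun_prop : Continuous _).aestronglyMeasurable]
  exact setIntegral_Iic_sub_eq_setIntegral_max exp_monotone ν hy.le

/-- Derivative of the negative part of the double-exponential tail: if `ν` is a Borel
measure on `ℝ` with `ν((−∞, y]) < ∞` and `∫_{(−∞, y]} e^x dν(x) < ∞` for every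
`y < 0`, and `φ(y) = ∫_{(−∞, y]} (e^y − e^x) dν(x)` for `y < 0`, then at every
`z < 0` with `ν({z}) = 0` the function `φ` is differentiable with
`φ′(z) = e^z ν((−∞, z])`. -/
theorem deriv_neg_double_exponential_tail (ν : Measure ℝ)
    (hfin : ∀ y < (0 : ℝ), ν (Iic y) < ⊤)
    (hint : ∀ y < (0 : ℝ), IntegrableOn (fun x => exp x) (Iic y) ν)
    (z : ℝ) (hz : z < 0) (hatom : ν {z} = 0) :
    HasDerivAt (fun y => ∫ x in Iic y, (exp y - exp x) ∂ν)
      (exp z * (ν (Iic z)).toReal) z :=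
  deriv_neg_double_exponential_tail_general ν hfin z hz hatom
end

section
/- Derivative of the positive part of the double-exponential tail: Let ν be a Borel measure on ℝ such that ν([y, ∞)) < ∞ and ∫_{[y, ∞)} e^x dν(x) < ∞ for every y > 0. Define φ(y) = ∫_{[y, ∞)} (e^x − e^y) dν(x) for y > 0. If z > 0 satisfies ν({z}) = 0, then φ is differentiable at z with φ′(z) = −e^z · ν([z, ∞)). -/
open MeasureTheory Real Set Topology Filter

/-!
For `a ≤ y` the tail integral equals `∫_{[a, ∞)} (e^x − e^y)⁺ dν(x)`, because the positive part
vanishes on `[a, y)`. Fixing `a = z / 2`, the integrand is Lipschitz in `y` near `z`, uniformly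
in `x`, and differentiable at `z` with derivative `−e^z 𝟙_{x > z}` for every `x ≠ z`, so
differentiation under the integral sign applies since `ν({z}) = 0`.
-/

lemma setIntegral_Ici_sub_eq_setIntegral_Ici_max {f : ℝ → ℝ} (hf : Monotone f) (ν : Measure ℝ)
    {a y : ℝ} (hay : a ≤ y) :
    ∫ x in Ici y, (f x - f y) ∂ν = ∫ x in Ici a, max (f x - f y) 0 ∂ν := by
  rw [setIntegral_eq_of_subset_of_forall_sdiff_eq_zero measurableSet_Ici (Ici_subset_Ici.2 hay)]
  · refine setIntegral_congr_fun measurableSet_Ici fun x hx => ?_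
    exact (max_eq_left (sub_nonneg.2 (hf hx))).symm
  · rintro x ⟨-, hxy⟩
    exact max_eq_right (sub_nonpos.2 (hf (not_le.1 hxy).le))

lemma hasDerivAt_max_sub_zero {f : ℝ → ℝ} {f' x z : ℝ} (hf : Monotone f)
    (hderiv : HasDerivAt f f' z) (hxz : x ≠ z) :
    HasDerivAt (fun y => max (f x - f y) 0) ((Ioi z).indicator (fun _ => -f') x) z := by
  rcases hxz.lt_or_gt with hxz | hzx
  · rw [indicator_of_notMem (show x ∉ Ioi z from not_lt.2 hxz.le)]
    refine (hasDerivAt_const z 0).congr_of_eventuallyEq ?_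
    filter_upwards [Ioi_mem_nhds hxz] with y hy
    exact max_eq_right (sub_nonpos.2 (hf (le_of_lt hy)))
  · rw [indicator_of_mem (show x ∈ Ioi z from hzx)]
    refine (hderiv.const_sub (f x)).congr_of_eventuallyEq ?_
    filter_upwards [Iio_mem_nhds hzx] with y hy
    exact max_eq_left (sub_nonneg.2 (hf (le_of_lt hy)))

lemma lipschitzOnWith_exp_Iic (b : ℝ) : LipschitzOnWith (Real.nnabs (exp b)) exp (Iic b) := by
  refine (convex_Iic b).lipschitzOnWith_of_nnnorm_hasDerivWithin_le
    (fun y _ => (hasDerivAt_exp y).hasDerivWithinAt) fun y hy => ?_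
  rw [← NNReal.coe_le_coe, coe_nnnorm, Real.coe_nnabs, norm_of_nonneg (exp_pos y).le,
    abs_of_pos (exp_pos b)]
  exact exp_le_exp.2 hy

lemma lipschitzOnWith_max_exp_sub (x b : ℝ) :
    LipschitzOnWith (Real.nnabs (exp b)) (fun y => max (exp x - exp y) 0) (Iic b) := by
  refine LipschitzOnWith.of_dist_le_mul fun y hy y' hy' => ?_
  calc dist (max (exp x - exp y) 0) (max (exp x - exp y') 0)
      ≤ dist (exp y) (exp y') := by
        rw [Real.dist_eq, Real.dist_eq, abs_sub_comm (exp y),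
          ← sub_sub_sub_cancel_left (exp y) (exp y') (exp x)]
        exact abs_max_sub_max_le_abs _ _ _
    _ ≤ Real.nnabs (exp b) * dist y y' := (lipschitzOnWith_exp_Iic b).dist_le_mul y hy y' hy'

/-- Derivative of the positive part of the double-exponential tail: if `ν` is a Borel
measure on `ℝ` with `ν([y, ∞)) < ∞` and `∫_{[y, ∞)} e^x dν(x) < ∞` for every
`y > 0`, and `φ(y) = ∫_{[y, ∞)} (e^x − e^y) dν(x)` for `y > 0`, then at every
`z > 0` with `ν({z}) = 0` the function `φ` is differentiable with
`φ′(z) = −e^z ν([z, ∞))`. -/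
theorem deriv_pos_double_exponential_tail (ν : Measure ℝ)
    (hfin : ∀ y > (0 : ℝ), ν (Ici y) < ⊤)
    (hint : ∀ y > (0 : ℝ), IntegrableOn (fun x => exp x) (Ici y) ν)
    (z : ℝ) (hz : 0 < z) (hatom : ν {z} = 0) :
    HasDerivAt (fun y => ∫ x in Ici y, (exp x - exp y) ∂ν)
      (-(exp z * (ν (Ici z)).toReal)) z := by
  have ha : 0 < z / 2 := half_pos hz
  have haz : z / 2 < z := half_lt_self hz
  have h_eq : (fun y => ∫ x in Ici (z / 2), max (exp x - exp y) 0 ∂ν)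
      =ᶠ[𝓝 z] fun y => ∫ x in Ici y, (exp x - exp y) ∂ν := by
    filter_upwards [Ioi_mem_nhds haz] with y hy
    exact (setIntegral_Ici_sub_eq_setIntegral_Ici_max exp_monotone ν (le_of_lt hy)).symm
  have h_int : IntegrableOn (fun x => max (exp x - exp z) 0) (Ici (z / 2)) ν := by
    refine (hint _ ha).mono' (by fun_prop) (Eventually.of_forall fun x => ?_)
    rw [Real.norm_of_nonneg (le_max_right _ _)]
    exact max_le (by linarith [exp_pos z]) (exp_pos x).le
  obtain ⟨-, h_deriv⟩ := hasDerivAt_integral_of_dominated_loc_of_lip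
    (μ := ν.restrict (Ici (z / 2))) (F := fun y x => max (exp x - exp y) 0)
    (bound := fun _ => exp (z + 1))
    (Iic_mem_nhds (lt_add_one z)) (Eventually.of_forall fun y => by fun_prop) h_int
    ((measurable_const.indicator measurableSet_Ioi).aestronglyMeasurable)
    (Eventually.of_forall fun x => lipschitzOnWith_max_exp_sub x (z + 1))
    (integrableOn_const (hfin _ ha).ne)
    (ae_restrict_of_ae ((measure_eq_zero_iff_ae_notMem.1 hatom).mono fun x hx =>
      hasDerivAt_max_sub_zero exp_monotone (hasDerivAt_exp z) hx))
  have h_value : ∫ x in Ici (z / 2), (Ioi z).indicator (fun _ => -exp z) x ∂ν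
      = -(exp z * (ν (Ici z)).toReal) := by
    rw [integral_indicator_const _ measurableSet_Ioi, measureReal_restrict_apply measurableSet_Ioi,
      inter_eq_left.2 (Ioi_subset_Ici haz.le), smul_eq_mul, measureReal_def,
      measure_congr (Ioi_ae_eq_Ici' hatom)]
    ring
  exact (h_deriv.congr_of_eventuallyEq h_eq.symm).congr_deriv h_value
end
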